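/- The quotient S_{Q, ⟨i⟩, ⟨i⟩}/conj has exactly 2 elements, represented by (⟨i⟩, ⟨i⟩, [1]) and (Q, Q, [1]); in particular (⟨i⟩, ⟨i⟩, [1]) and (⟨i⟩, ⟨i⟩, [j]) become identified under conjugation. -/

import Mathlib

open Quaternion Pointwise

noncomputable section

instance : CharZero ℍ[ℝ] := charZero_of_injective_algebraMap (algebraMap ℝ ℍ[ℝ]).injective

/-- The imaginary unit quaternion `i`. -/
def qi : ℍ[ℝ] := ⟨0,1,0,0⟩
/-- The imaginary unit quaternion `j`. -/
def qj : ℍ[ℝ] := ⟨0,0,1,0⟩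
/-- The imaginary unit quaternion `k`. -/
def qk : ℍ[ℝ] := ⟨0,0,0,1⟩
/-- The quaternion `c = (1 + i + j + k)/2`. -/
def qc : ℍ[ℝ] := (1 + qi + qj + qk) / 2
/-- The quaternion `(i + j)/√2`. -/
def qs : ℍ[ℝ] := (qi + qj) / ((Real.sqrt 2 : ℝ) : ℍ[ℝ])

lemma sqrt2_ne : ((Real.sqrt 2 : ℝ) : ℍ[ℝ]) ≠ 0 := by
  rw [ne_eq, ← Quaternion.coe_zero, Quaternion.coe_inj]
  positivity

/-- `i` as a unit of the quaternions. -/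
def ui : ℍ[ℝ]ˣ := Units.mk0 qi (by rw [ne_eq, Quaternion.ext_iff]; simp [qi])
/-- `j` as a unit of the quaternions. -/
def uj : ℍ[ℝ]ˣ := Units.mk0 qj (by rw [ne_eq, Quaternion.ext_iff]; simp [qj])
/-- `k` as a unit of the quaternions. -/
def uk : ℍ[ℝ]ˣ := Units.mk0 qk (by rw [ne_eq, Quaternion.ext_iff]; simp [qk])
/-- `c = (1+i+j+k)/2` as a unit of the quaternions. -/
def uc : ℍ[ℝ]ˣ := Units.mk0 qc
  (div_ne_zero (by rw [ne_eq, Quaternion.ext_iff]; simp; simp [qi, qj, qk]) two_ne_zero)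
/-- `(i+j)/√2` as a unit of the quaternions. -/
def us : ℍ[ℝ]ˣ := Units.mk0 qs
  (div_ne_zero (by rw [ne_eq, Quaternion.ext_iff]; simp; simp [qi, qj]) sqrt2_ne)

/-- The quaternion group `Q = ⟨i, j⟩ = {±1, ±i, ±j, ±k}`. -/
def QQ : Subgroup ℍ[ℝ]ˣ := Subgroup.closure {ui, uj}
/-- The binary tetrahedral group `2T = ⟨i, c⟩`. -/
def TT : Subgroup ℍ[ℝ]ˣ := Subgroup.closure {ui, uc}
/-- The binary octahedral group `2O = ⟨c, (i+j)/√2⟩`. -/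
def OO : Subgroup ℍ[ℝ]ˣ := Subgroup.closure {uc, us}

lemma uij : ui * uj = uk := by
  apply Units.ext
  show qi * qj = qk
  ext <;> simp <;> simp [qi, qj, qk]

lemma uii : ui * ui = -1 := by
  apply Units.ext
  show qi * qi = ((-1 : ℍ[ℝ]ˣ) : ℍ[ℝ])
  rw [Units.val_neg, Units.val_one]
  ext <;> simp <;> simp [qi]

lemma hui : ui ∈ QQ := Subgroup.subset_closure (by simp)
lemma huj : uj ∈ QQ := Subgroup.subset_closure (by simp)
lemma huk : uk ∈ QQ := uij ▸ mul_mem hui huj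
lemma hneg1 : (-1 : ℍ[ℝ]ˣ) ∈ QQ := uii ▸ mul_mem hui hui

/-- The quaternion group `Q` regarded as a group in its own right. -/
abbrev GQ := ↥QQ

/-- `i` as an element of the quaternion group `Q`. -/
def iQ : GQ := ⟨ui, hui⟩
/-- `j` as an element of the quaternion group `Q`. -/
def jQ : GQ := ⟨uj, huj⟩
/-- `k` as an element of the quaternion group `Q`. -/
def kQ : GQ := ⟨uk, huk⟩
/-- `-1` as an element of the quaternion group `Q`. -/
def negOneQ : GQ := ⟨-1, hneg1⟩

/-- The cyclic subgroup `⟨i⟩ = {±1, ±i}` of `Q`. -/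
def Ii : Subgroup GQ := Subgroup.zpowers iQ
/-- The cyclic subgroup `⟨j⟩ = {±1, ±j}` of `Q`. -/
def Jj : Subgroup GQ := Subgroup.zpowers jQ
/-- The cyclic subgroup `⟨k⟩ = {±1, ±k}` of `Q`. -/
def Kk : Subgroup GQ := Subgroup.zpowers kQ
/-- The cyclic subgroup `⟨-1⟩ = {±1}` of `Q`. -/
def N1 : Subgroup GQ := Subgroup.zpowers negOneQ

/-- The subset `⟨i⟩ ⊆ Q`. -/
def Si : Set GQ := ↑Ii

/-- The conditions on a triple `(H, N, g)` defining membership in `S_{G,S,S'}`: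
`N` is a normal subgroup of `H`, `gSg⁻¹ ⊆ H`, `gS'g⁻¹ ⊆ N`, and there is a finite
subset `T ⊆ N` with `⟨gSg⁻¹ ∪ T⟩ = H` whose normal closure in `H` is `N`. -/
def IsAdmissible {G : Type*} [Group G] (S S' : Set G) (H N : Subgroup G) (g : G) : Prop :=
  N ≤ H ∧ (∀ h ∈ H, ∀ n ∈ N, h * n * h⁻¹ ∈ N) ∧
  (fun s => g * s * g⁻¹) '' S ⊆ (H : Set G) ∧
  (fun s => g * s * g⁻¹) '' S' ⊆ (N : Set G) ∧
  ∃ T : Finset G, (T : Set G) ⊆ (N : Set G) ∧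
    Subgroup.closure ((fun s => g * s * g⁻¹) '' S ∪ (T : Set G)) = H ∧
    Subgroup.closure {x | ∃ h ∈ H, ∃ t ∈ T, x = h * t * h⁻¹} = N

/-- The double coset `N g C_G(S)` of `g` in `N\G/C_G(S)`, recorded as a subset of `G`. -/
def dcoset {G : Type*} [Group G] (S : Set G) (N : Subgroup G) (g : G) : Set G :=
  (N : Set G) * {g} * ↑(Subgroup.centralizer S)

/-- The set `S_{G,S,S'}` of triples `(H, N, [g])`, where the double coset
`[g] ∈ N\G/C_G(S)` is recorded as the subset `N g C_G(S)` of `G`. -/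
def STriples {G : Type*} [Group G] (S S' : Set G) : Set (Subgroup G × Subgroup G × Set G) :=
  {p | ∃ g : G, p.2.2 = dcoset S p.2.1 g ∧ IsAdmissible S S' p.1 p.2.1 g}

/-- The conjugation action of `x ∈ G` on triples `(H, N, [g])`:
it sends `(H, N, [g])` to `(xHx⁻¹, xNx⁻¹, [xg])`; on the double coset recorded as
the subset `N g C_G(S)` of `G` this is left translation by `x`. -/
def conjTriple {G : Type*} [Group G] (x : G) (p : Subgroup G × Subgroup G × Set G) :
    Subgroup G × Subgroup G × Set G :=
  (p.1.map (MulAut.conj x).toMonoidHom, p.2.1.map (MulAut.conj x).toMonoidHom,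
    (fun y => x * y) '' p.2.2)

/-!
`⟨i⟩` is normalized by `j` and contains `j² = i²`, so it has index 2 in `Q = ⟨i, j⟩`: it is a
normal coatom. For a triple `(H, N, [g])` normality gives `⟨i⟩ = g⟨i⟩g⁻¹ ⊆ N`, and since
`S = S'` the generators `g⟨i⟩g⁻¹ ∪ T` of `H` already lie in `N`, so `H = N ∈ {⟨i⟩, Q}`.
Conjugating by `g⁻¹` fixes the normal subgroup `N` and moves `[g]` to `[1]`, leaving two
classes, which `H` (a conjugation invariant, as both candidates are normal) separates.
-/

open Subgroup

section Coatom

variable {G : Type*} [Group G] {a b : G}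

lemma zpowers_normal_of_conj_eq_inv (hG : closure {a, b} = ⊤) (hba : b * a * b⁻¹ = a⁻¹) :
    (zpowers a).Normal := by
  rw [← normalizer_eq_top_iff, eq_top_iff, ← hG, closure_le, Set.insert_subset_iff,
    Set.singleton_subset_iff]
  refine ⟨le_normalizer (mem_zpowers a), ?_⟩
  rw [SetLike.mem_coe, mem_normalizer_iff_map_conj_eq, MonoidHom.map_zpowers]
  simp [hba]

lemma eq_one_or_eq_mk_of_closure_pair_eq_top [(zpowers a).Normal] (hG : closure {a, b} = ⊤)
    (hb2 : b ^ 2 ∈ zpowers a) (q : G ⧸ zpowers a) : q = 1 ∨ q = b := by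
  induction q using QuotientGroup.induction_on with | H g => ?_
  have hb : (b : G ⧸ zpowers a) * b = 1 := by
    rw [← QuotientGroup.mk_mul, ← sq, QuotientGroup.eq_one_iff]; exact hb2
  have hg : g ∈ closure {a, b} := hG ▸ mem_top g
  induction hg using closure_induction with
  | mem x hx =>
    rcases hx with rfl | rfl
    · exact .inl ((QuotientGroup.eq_one_iff x).2 (mem_zpowers x))
    · exact .inr rfl
  | one => exact .inl rfl
  | mul x y _ _ hx hy =>
    rcases hx with hx | hx <;> rcases hy with hy | hy <;> simp [hx, hy, hb]
  | inv x _ hx =>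
    rcases hx with hx | hx
    · simp [hx]
    · simp [hx, inv_eq_of_mul_eq_one_right hb]

lemma isCoatom_zpowers_of_closure_pair_eq_top (hG : closure {a, b} = ⊤)
    (hba : b * a * b⁻¹ = a⁻¹) (hb2 : b ^ 2 ∈ zpowers a) (hb : b ∉ zpowers a) :
    IsCoatom (zpowers a) := by
  have := zpowers_normal_of_conj_eq_inv hG hba
  refine ⟨fun h => hb (h ▸ mem_top b), fun L hL => ?_⟩
  obtain ⟨x, hxL, hxa⟩ := SetLike.exists_of_lt hL
  have hbL : b ∈ L := by
    rcases eq_one_or_eq_mk_of_closure_pair_eq_top hG hb2 (x : G ⧸ zpowers a) with h | h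
    · exact absurd ((QuotientGroup.eq_one_iff x).1 h) hxa
    · rw [QuotientGroup.eq] at h
      simpa using mul_mem hxL (hL.le h)
  rw [eq_top_iff, ← hG, closure_le, Set.insert_subset_iff, Set.singleton_subset_iff]
  exact ⟨hL.le (mem_zpowers a), hbL⟩

end Coatom

section Triples

variable {G : Type*} [Group G]

lemma conjTriple_dcoset (x g : G) (S : Set G) (H N : Subgroup G) :
    conjTriple x (H, N, dcoset S N g) =
      (H.map (MulAut.conj x).toMonoidHom, N.map (MulAut.conj x).toMonoidHom,
        dcoset S (N.map (MulAut.conj x).toMonoidHom) (x * g)) := by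
  refine Prod.ext rfl (Prod.ext rfl ?_)
  ext y
  simp only [conjTriple, dcoset, Set.mem_image, Set.mem_mul, Set.mem_singleton_iff,
    SetLike.mem_coe, mem_map]
  constructor
  · rintro ⟨_, ⟨_, ⟨n, hn, _, rfl, rfl⟩, c, hc, rfl⟩, rfl⟩
    exact ⟨_, ⟨_, ⟨n, hn, rfl⟩, _, rfl, rfl⟩, c, hc, by simp [mul_assoc]⟩
  · rintro ⟨_, ⟨_, ⟨n, hn, rfl⟩, _, rfl, rfl⟩, c, hc, rfl⟩
    exact ⟨_, ⟨_, ⟨n, hn, _, rfl, rfl⟩, c, hc, rfl⟩, by simp [mul_assoc]⟩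

lemma map_conj_toMonoidHom_of_normal (N : Subgroup G) [N.Normal] (x : G) :
    N.map (MulAut.conj x).toMonoidHom = N :=
  Normal.map_conj_eq N x

lemma conjTriple_inv_dcoset_of_normal (g : G) (S : Set G) (N : Subgroup G) [N.Normal] :
    conjTriple g⁻¹ (N, N, dcoset S N g) = (N, N, dcoset S N 1) := by
  rw [conjTriple_dcoset, inv_mul_cancel, map_conj_toMonoidHom_of_normal]

namespace IsAdmissible

variable {S S' : Set G} {H N : Subgroup G} {g : G}

lemma eq_of_subset (h : IsAdmissible S S' H N g) (hS : S ⊆ S') : H = N := by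
  obtain ⟨hNH, -, -, hS'N, T, hTN, hH, -⟩ := h
  refine le_antisymm ?_ hNH
  rw [← hH, closure_le]
  exact Set.union_subset ((Set.image_mono hS).trans hS'N) hTN

lemma le_of_normal {K : Subgroup G} [K.Normal] (h : IsAdmissible S K H N g) : K ≤ N :=
  fun k hk => h.2.2.2.1 ⟨g⁻¹ * k * g, Normal.conj_mem' ‹_› k hk g, by group⟩

end IsAdmissible

lemma isAdmissible_one {S S' : Set G} {N : Subgroup G} (hN : N.FG) (hS : S ⊆ N) (hS' : S' ⊆ N) :
    IsAdmissible S S' N N 1 := by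
  obtain ⟨T, hT⟩ := hN
  have hTN : (T : Set G) ⊆ N := hT ▸ subset_closure
  simp only [IsAdmissible, one_mul, inv_one, mul_one, Set.image_id']
  refine ⟨le_rfl, fun h hh n hn => mul_mem (mul_mem hh hn) (inv_mem hh), hS, hS', T, hTN, ?_, ?_⟩
  · exact le_antisymm ((closure_le _).2 (Set.union_subset hS hTN))
      (hT.symm.le.trans (closure_mono Set.subset_union_right))
  · refine le_antisymm ?_
      (hT.symm.le.trans (closure_mono fun t ht => ⟨1, one_mem N, t, ht, by group⟩))
    rw [closure_le]
    rintro _ ⟨h, hh, t, ht, rfl⟩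
    exact mul_mem (mul_mem hh (hTN ht)) (inv_mem hh)

lemma mem_STriples_one {S S' : Set G} {N : Subgroup G} (hN : N.FG) (hS : S ⊆ N) (hS' : S' ⊆ N) :
    (N, N, dcoset S N 1) ∈ STriples S S' :=
  ⟨1, rfl, isAdmissible_one hN hS hS'⟩

lemma exists_eq_dcoset_of_mem_STriples {K : Subgroup G} [K.Normal] (hK : IsCoatom K)
    {p : Subgroup G × Subgroup G × Set G} (hp : p ∈ STriples (K : Set G) K) :
    ∃ N g, (N = K ∨ N = ⊤) ∧ p = (N, N, dcoset K N g) := by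
  obtain ⟨H, N, D⟩ := p
  obtain ⟨g, hD, hadm⟩ := hp
  dsimp only at hD hadm
  subst hD
  obtain rfl := hadm.eq_of_subset le_rfl
  refine ⟨H, g, ?_, rfl⟩
  rcases hadm.le_of_normal.eq_or_lt with h | h
  · exact .inl h.symm
  · exact .inr (hK.2 H h)

/-- The conjugation relation defining `S_{G,S,S'}/conj`. -/
def ConjRel (S S' : Set G) (p q : STriples S S') : Prop :=
  ∃ x : G, (q : Subgroup G × Subgroup G × Set G) = conjTriple x p

theorem card_quot_conjRel_eq_two {K : Subgroup G} [K.Normal] (hK : IsCoatom K) (hKfg : K.FG)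
    [Group.FG G] : Nat.card (Quot (ConjRel (K : Set G) K)) = 2 := by
  have hmem (N : Subgroup G) (hN : N = K ∨ N = ⊤) :
      (N, N, dcoset K N 1) ∈ STriples (K : Set G) K := by
    rcases hN with rfl | rfl
    · exact mem_STriples_one hKfg subset_rfl subset_rfl
    · exact mem_STriples_one (Group.fg_def.1 ‹_›) (Set.subset_univ _) (Set.subset_univ _)
  let f (p : STriples (K : Set G) K) : Prop := p.1.1 = K
  have hf : ∀ p q, ConjRel _ _ p q → f p = f q := by
    rintro p q ⟨x, hx⟩
    have := (map_injective (f := (MulAut.conj x).toMonoidHom) (MulAut.conj x).injective).eq_iff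
      (a := p.1.1) (b := K)
    rw [map_conj_toMonoidHom_of_normal K] at this
    simp only [f, hx, conjTriple]
    exact propext this.symm
  rw [Nat.card_eq_two_iff]
  refine ⟨Quot.mk _ ⟨_, hmem K (.inl rfl)⟩, Quot.mk _ ⟨_, hmem ⊤ (.inr rfl)⟩, fun h => ?_, ?_⟩
  · have := congrArg (Quot.lift f hf) h
    exact hK.1 (this.mp rfl).symm
  · refine Set.eq_univ_of_forall fun q => ?_
    induction q using Quot.ind with | mk p => ?_
    obtain ⟨N, g, hN, hp⟩ := exists_eq_dcoset_of_mem_STriples hK p.2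
    have : N.Normal := by rcases hN with rfl | rfl <;> infer_instance
    have hpN : ConjRel _ _ p ⟨_, hmem N hN⟩ :=
      ⟨g⁻¹, by simp only [hp, conjTriple_inv_dcoset_of_normal]⟩
    rcases hN with rfl | rfl
    exacts [.inl (Quot.sound hpN), .inr (Quot.sound hpN)]

end Triples

section QuaternionGroup

lemma iQ_mul_jQ_mul_iQ : iQ * jQ * iQ = jQ := by
  refine Subtype.ext (Units.ext ?_)
  change qi * qj * qi = qj
  ext <;> simp only [Quaternion.re_mul, Quaternion.imI_mul, Quaternion.imJ_mul,
    Quaternion.imK_mul] <;> simp [qi, qj]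

lemma jQ_sq : jQ ^ 2 = iQ ^ 2 := by
  rw [sq, sq]
  refine Subtype.ext (Units.ext ?_)
  change qj * qj = qi * qi
  ext <;> simp only [Quaternion.re_mul, Quaternion.imI_mul, Quaternion.imJ_mul,
    Quaternion.imK_mul] <;> simp [qi, qj]

lemma iQ_mul_jQ_ne : iQ * jQ ≠ jQ * iQ := by
  intro h
  have := congrArg (fun x : GQ => ((x : ℍ[ℝ]ˣ) : ℍ[ℝ]).imK) h
  change (qi * qj).imK = (qj * qi).imK at this
  simp only [Quaternion.imK_mul] at this
  norm_num [qi, qj] at this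

lemma closure_iQ_jQ : Subgroup.closure {iQ, jQ} = ⊤ := by
  have hpre : ((↑) : GQ → ℍ[ℝ]ˣ) ⁻¹' {ui, uj} = {iQ, jQ} := by
    ext x
    simp [iQ, jQ, Subtype.ext_iff]
  rw [← hpre]
  exact closure_closure_coe_preimage

lemma jQ_notMem_Ii : jQ ∉ Ii := by
  rintro ⟨n, hn⟩
  have := (Commute.refl iQ).zpow_left n
  rw [show iQ ^ n = jQ from hn] at this
  exact iQ_mul_jQ_ne this.eq.symm

lemma jQ_mul_iQ_mul_inv : jQ * iQ * jQ⁻¹ = iQ⁻¹ := by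
  rw [mul_inv_eq_iff_eq_mul, eq_inv_mul_iff_mul_eq, ← mul_assoc, iQ_mul_jQ_mul_iQ]

instance : Ii.Normal := zpowers_normal_of_conj_eq_inv closure_iQ_jQ jQ_mul_iQ_mul_inv

lemma isCoatom_Ii : IsCoatom Ii := by
  refine isCoatom_zpowers_of_closure_pair_eq_top closure_iQ_jQ jQ_mul_iQ_mul_inv ?_ jQ_notMem_Ii
  rw [jQ_sq]
  exact pow_mem (mem_zpowers iQ) 2

lemma Ii_fg : Ii.FG := ⟨{iQ}, by rw [Finset.coe_singleton, ← zpowers_eq_closure]; rfl⟩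

instance : Group.FG GQ := Group.fg_iff.2 ⟨{iQ, jQ}, closure_iQ_jQ, Set.toFinite _⟩

end QuaternionGroup

/-- The quotient `S_{Q,⟨i⟩,⟨i⟩}/conj` has exactly 2 elements, represented by
`(⟨i⟩,⟨i⟩,[1])` and `(Q,Q,[1])`; in particular `(⟨i⟩,⟨i⟩,[1])` and `(⟨i⟩,⟨i⟩,[j])`
become identified under conjugation. -/
theorem statement14 :
    Nat.card (Quot (fun p q : ↥(STriples Si Si) =>
      ∃ x : GQ, (q : Subgroup GQ × Subgroup GQ × Set GQ) = conjTriple x ↑p)) = 2 ∧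
    (Ii, Ii, dcoset Si Ii 1) ∈ STriples Si Si ∧
    (⊤, ⊤, dcoset Si (⊤ : Subgroup GQ) 1) ∈ STriples Si Si ∧
    (¬ ∃ x : GQ, conjTriple x (Ii, Ii, dcoset Si Ii 1) =
      (⊤, ⊤, dcoset Si (⊤ : Subgroup GQ) 1)) ∧
    (∃ x : GQ, conjTriple x (Ii, Ii, dcoset Si Ii 1) = (Ii, Ii, dcoset Si Ii jQ)) := by
  refine ⟨card_quot_conjRel_eq_two isCoatom_Ii Ii_fg,
    mem_STriples_one Ii_fg subset_rfl subset_rfl,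
    mem_STriples_one (Group.fg_def.1 inferInstance) (Set.subset_univ _) (Set.subset_univ _),
    ?_, ⟨jQ, ?_⟩⟩
  · rintro ⟨x, hx⟩
    rw [conjTriple_dcoset, map_conj_toMonoidHom_of_normal] at hx
    exact isCoatom_Ii.1 (congrArg Prod.fst hx)
  · rw [conjTriple_dcoset, map_conj_toMonoidHom_of_normal, mul_one]
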